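/- For all x ∈ (0, π/2]: ((4√2 - 2)/(7π))·(x + sin x + 8 sin(x/2)) < Si(x) < (1/6)·(x + sin x + 8 sin(x/2)), where Si(x) = ∫₀ˣ (sin t)/t dt. -/

import Mathlib

/-!
The alternating Maclaurin partial sums bracket `sin` on `[0, ∞)`: the remainders of `sin` and
`cos` vanish at `0` and are, up to sign, each other's derivatives, so their signs propagate by
induction. Dividing by `t` and integrating brackets `Si x` between its partial sums of degrees 7
and 9, while applying the bounds to `sin x` and `sin (x / 2)` brackets `x + sin x + 8 sin (x / 2)`
between `6 (x - x³/18 + x⁵/576) - 17 x⁷/80640` and `6 (x - x³/18 + x⁵/576)`. What remains are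
polynomial inequalities on `0 < x ≤ 8/5`, which contains `(0, π/2]`.
-/

open Real Finset intervalIntegral
open scoped Nat

noncomputable section

def sinTaylor (n : ℕ) (t : ℝ) : ℝ := ∑ k ∈ range n, (-1) ^ k * t ^ (2 * k + 1) / (2 * k + 1)!

def cosTaylor (n : ℕ) (t : ℝ) : ℝ := ∑ k ∈ range n, (-1) ^ k * t ^ (2 * k) / (2 * k)!

def sincTaylor (n : ℕ) (t : ℝ) : ℝ := ∑ k ∈ range n, (-1) ^ k * t ^ (2 * k) / (2 * k + 1)!

def sineIntegralTaylor (n : ℕ) (x : ℝ) : ℝ :=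
  ∑ k ∈ range n, (-1) ^ k * x ^ (2 * k + 1) / ((2 * k + 1) * (2 * k + 1)!)

def sineIntegral (x : ℝ) : ℝ := ∫ t in (0 : ℝ)..x, sin t / t

end

lemma hasDerivAt_sinTaylor (n : ℕ) (t : ℝ) : HasDerivAt (sinTaylor n) (cosTaylor n t) t := by
  refine HasDerivAt.fun_sum fun k _ => ?_
  refine (((hasDerivAt_pow (2 * k + 1) t).const_mul ((-1 : ℝ) ^ k)).div_const
    ((2 * k + 1)! : ℝ)).congr_deriv ?_
  rw [Nat.factorial_succ]
  push_cast
  field_simp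

lemma hasDerivAt_cosTaylor_succ (n : ℕ) (t : ℝ) :
    HasDerivAt (cosTaylor (n + 1)) (-sinTaylor n t) t := by
  refine (HasDerivAt.fun_sum (u := range (n + 1)) fun k _ =>
    ((hasDerivAt_pow (2 * k) t).const_mul ((-1 : ℝ) ^ k)).div_const ((2 * k)! : ℝ)).congr_deriv ?_
  rw [sum_range_succ', sinTaylor, ← sum_neg_distrib]
  simp only [mul_zero, Nat.cast_zero, zero_mul, zero_div, add_zero]
  refine sum_congr rfl fun k _ => ?_
  rw [show 2 * (k + 1) = 2 * k + 1 + 1 by ring, Nat.factorial_succ]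
  push_cast
  field_simp
  ring

lemma sinTaylor_eq_mul_sincTaylor (n : ℕ) (t : ℝ) : sinTaylor n t = t * sincTaylor n t := by
  rw [sinTaylor, sincTaylor, mul_sum]
  exact sum_congr rfl fun k _ => by ring

lemma nonneg_of_hasDerivAt_nonneg {f f' : ℝ → ℝ} (hf : ∀ t, HasDerivAt f (f' t) t)
    (hf' : ∀ t, 0 ≤ t → 0 ≤ f' t) (h₀ : f 0 = 0) {t : ℝ} (ht : 0 ≤ t) : 0 ≤ f t := by
  have hmono : MonotoneOn f (Set.Ici 0) :=
    monotoneOn_of_hasDerivWithinAt_nonneg (convex_Ici 0)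
      (fun s _ => (hf s).continuousAt.continuousWithinAt) (fun s _ => (hf s).hasDerivWithinAt)
      (fun s hs => hf' s (interior_subset hs))
  exact h₀ ▸ hmono Set.self_mem_Ici ht ht

lemma sin_sub_sinTaylor_sign_of_cos {n : ℕ}
    (hcos : ∀ t, 0 ≤ t → 0 ≤ (-1) ^ (n + 1) * (cos t - cosTaylor (n + 1) t)) {t : ℝ}
    (ht : 0 ≤ t) : 0 ≤ (-1) ^ (n + 1) * (sin t - sinTaylor (n + 1) t) :=
  nonneg_of_hasDerivAt_nonneg
    (fun s => ((hasDerivAt_sin s).sub (hasDerivAt_sinTaylor _ s)).const_mul _) hcos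
    (by simp [sinTaylor]) ht

lemma cos_sub_cosTaylor_sign (n : ℕ) {t : ℝ} (ht : 0 ≤ t) :
    0 ≤ (-1) ^ (n + 1) * (cos t - cosTaylor (n + 1) t) := by
  induction n generalizing t with
  | zero => simp [cosTaylor, cos_le_one]
  | succ n ih =>
    refine nonneg_of_hasDerivAt_nonneg
      (fun s => ((hasDerivAt_cos s).sub (hasDerivAt_cosTaylor_succ _ s)).const_mul _)
      (fun s hs => ?_) (by simp [cosTaylor, sum_range_succ']) ht
    convert sin_sub_sinTaylor_sign_of_cos (fun _ => ih) hs using 1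
    ring

lemma sin_sub_sinTaylor_sign (n : ℕ) {t : ℝ} (ht : 0 ≤ t) :
    0 ≤ (-1) ^ (n + 1) * (sin t - sinTaylor (n + 1) t) :=
  sin_sub_sinTaylor_sign_of_cos (fun _ => cos_sub_cosTaylor_sign n) ht

lemma sinc_sub_sincTaylor_sign (n : ℕ) {t : ℝ} (ht : 0 ≤ t) :
    0 ≤ (-1) ^ (n + 1) * (sinc t - sincTaylor (n + 1) t) := by
  rcases ht.eq_or_lt with rfl | ht
  · simp [sincTaylor, sum_range_succ']
  have hsinc : sinc t - sincTaylor (n + 1) t = (sin t - sinTaylor (n + 1) t) / t := by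
    rw [sinc_of_ne_zero ht.ne', sinTaylor_eq_mul_sincTaylor]
    field_simp
  rw [hsinc, ← mul_div_assoc]
  exact div_nonneg (sin_sub_sinTaylor_sign n ht.le) ht.le

lemma continuous_sincTaylor (n : ℕ) : Continuous (sincTaylor n) := by
  unfold sincTaylor
  fun_prop

lemma integral_sincTaylor (n : ℕ) (x : ℝ) :
    ∫ t in (0 : ℝ)..x, sincTaylor n t = sineIntegralTaylor n x := by
  unfold sincTaylor
  rw [integral_finsetSum fun k _ => (by fun_prop : Continuous _).intervalIntegrable _ _]
  refine sum_congr rfl fun k _ => ?_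
  simp only [integral_div, integral_const_mul, integral_pow]
  push_cast
  field_simp
  ring

lemma sineIntegral_eq_integral_sinc (x : ℝ) : sineIntegral x = ∫ t in (0 : ℝ)..x, sinc t :=
  integral_congr_ae <| (MeasureTheory.volume.ae_ne 0).mono fun _ ht _ => (sinc_of_ne_zero ht).symm

lemma sineIntegral_sub_sineIntegralTaylor_sign (n : ℕ) {x : ℝ} (hx : 0 ≤ x) :
    0 ≤ (-1) ^ (n + 1) * (sineIntegral x - sineIntegralTaylor (n + 1) x) := by
  rw [sineIntegral_eq_integral_sinc, ← integral_sincTaylor,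
    ← integral_sub (continuous_sinc.intervalIntegrable _ _)
      ((continuous_sincTaylor _).intervalIntegrable _ _), ← integral_const_mul]
  exact integral_nonneg hx fun t ht => sinc_sub_sincTaylor_sign n ht.1

lemma sinTaylor_even_le_sin (m : ℕ) {t : ℝ} (ht : 0 ≤ t) : sinTaylor (2 * m + 2) t ≤ sin t := by
  have h := sin_sub_sinTaylor_sign (2 * m + 1) ht
  rw [Even.neg_one_pow ⟨m + 1, by ring⟩, one_mul] at h
  linarith

lemma sin_le_sinTaylor_odd (m : ℕ) {t : ℝ} (ht : 0 ≤ t) : sin t ≤ sinTaylor (2 * m + 1) t := by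
  have h := sin_sub_sinTaylor_sign (2 * m) ht
  rw [Odd.neg_one_pow ⟨m, rfl⟩] at h
  linarith

lemma sineIntegralTaylor_even_le (m : ℕ) {x : ℝ} (hx : 0 ≤ x) :
    sineIntegralTaylor (2 * m + 2) x ≤ sineIntegral x := by
  have h := sineIntegral_sub_sineIntegralTaylor_sign (2 * m + 1) hx
  rw [Even.neg_one_pow ⟨m + 1, by ring⟩, one_mul] at h
  linarith

lemma sineIntegral_le_sineIntegralTaylor_odd (m : ℕ) {x : ℝ} (hx : 0 ≤ x) :
    sineIntegral x ≤ sineIntegralTaylor (2 * m + 1) x := by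
  have h := sineIntegral_sub_sineIntegralTaylor_sign (2 * m) hx
  rw [Odd.neg_one_pow ⟨m, rfl⟩] at h
  linarith

lemma sinTaylor_three (t : ℝ) : sinTaylor 3 t = t - t ^ 3 / 6 + t ^ 5 / 120 := by
  norm_num [sinTaylor, sum_range_succ, Nat.factorial]
  ring

lemma sinTaylor_four (t : ℝ) : sinTaylor 4 t = t - t ^ 3 / 6 + t ^ 5 / 120 - t ^ 7 / 5040 := by
  norm_num [sinTaylor, sum_range_succ, Nat.factorial]
  ring

lemma sineIntegralTaylor_four (x : ℝ) :
    sineIntegralTaylor 4 x = x - x ^ 3 / 18 + x ^ 5 / 600 - x ^ 7 / 35280 := by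
  norm_num [sineIntegralTaylor, sum_range_succ, Nat.factorial]
  ring

lemma sineIntegralTaylor_five (x : ℝ) : sineIntegralTaylor 5 x =
    x - x ^ 3 / 18 + x ^ 5 / 600 - x ^ 7 / 35280 + x ^ 9 / 3265920 := by
  norm_num [sineIntegralTaylor, sum_range_succ, Nat.factorial]
  ring

lemma add_sin_add_eight_sin_half_le {x : ℝ} (hx : 0 ≤ x) :
    x + sin x + 8 * sin (x / 2) ≤ 6 * (x - x ^ 3 / 18 + x ^ 5 / 576) := by
  have h₁ := sin_le_sinTaylor_odd 1 hx
  have h₂ := sin_le_sinTaylor_odd 1 (by positivity : 0 ≤ x / 2)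
  norm_num [sinTaylor_three] at h₁ h₂
  linear_combination h₁ + 8 * h₂

lemma le_add_sin_add_eight_sin_half {x : ℝ} (hx : 0 ≤ x) :
    6 * (x - x ^ 3 / 18 + x ^ 5 / 576 - 17 * x ^ 7 / 483840) ≤ x + sin x + 8 * sin (x / 2) := by
  have h₁ := sinTaylor_even_le_sin 1 hx
  have h₂ := sinTaylor_even_le_sin 1 (by positivity : 0 ≤ x / 2)
  norm_num [sinTaylor_four] at h₁ h₂
  linear_combination h₁ + 8 * h₂

lemma mul_lt_sineIntegralTaylor_four {x : ℝ} (hx₀ : 0 < x) (hx : x ≤ 8 / 5) :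
    499 / 500 * (x - x ^ 3 / 18 + x ^ 5 / 576) < sineIntegralTaylor 4 x := by
  have hx2 : x ^ 2 ≤ 64 / 25 := by nlinarith
  rw [sineIntegralTaylor_four]
  nlinarith [pow_pos hx₀ 3, pow_pos hx₀ 5]

lemma sineIntegralTaylor_five_lt {x : ℝ} (hx₀ : 0 < x) (hx : x ≤ 8 / 5) :
    sineIntegralTaylor 5 x < x - x ^ 3 / 18 + x ^ 5 / 576 - 17 * x ^ 7 / 483840 := by
  have hx2 : x ^ 2 ≤ 64 / 25 := by nlinarith
  rw [sineIntegralTaylor_five]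
  nlinarith [pow_pos hx₀ 5, pow_pos hx₀ 7]

-- `6 * (4 * √2 - 2) / (7 * π) ≈ 0.99773`
lemma six_mul_coeff_lt : 6 * ((4 * √2 - 2) / (7 * π)) < 499 / 500 := by
  have hsqrt : √2 < 1.4143 := (sqrt_lt' (by norm_num)).2 (by norm_num)
  rw [mul_div_assoc', div_lt_iff₀ (by positivity)]
  nlinarith [pi_gt_d4]

theorem stmt19 (x : ℝ) (hx : x ∈ Set.Ioc 0 (Real.pi/2)) :
    ((4*Real.sqrt 2 - 2)/(7*Real.pi)) * (x + Real.sin x + 8*Real.sin (x/2))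
      < ∫ t in (0:ℝ)..x, Real.sin t / t ∧
    (∫ t in (0:ℝ)..x, Real.sin t / t)
      < (1/6) * (x + Real.sin x + 8*Real.sin (x/2)) := by
  obtain ⟨hx₀, hxπ⟩ := hx
  have hx : x ≤ 8 / 5 := by linarith [pi_lt_d2]
  change _ < sineIntegral x ∧ sineIntegral x < _
  constructor
  · have hc : 0 ≤ (4 * √2 - 2) / (7 * π) :=
      div_nonneg (by linarith [one_lt_sqrt_two]) (by positivity)
    calc (4 * √2 - 2) / (7 * π) * (x + sin x + 8 * sin (x / 2))
        ≤ (4 * √2 - 2) / (7 * π) * (6 * (x - x ^ 3 / 18 + x ^ 5 / 576)) :=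
          mul_le_mul_of_nonneg_left (add_sin_add_eight_sin_half_le hx₀.le) hc
      _ = 6 * ((4 * √2 - 2) / (7 * π)) * (x - x ^ 3 / 18 + x ^ 5 / 576) := by ring
      _ ≤ 499 / 500 * (x - x ^ 3 / 18 + x ^ 5 / 576) := by
          have hp : 0 < x - x ^ 3 / 18 + x ^ 5 / 576 := by nlinarith [pow_pos hx₀ 5]
          gcongr
          exact six_mul_coeff_lt.le
      _ < sineIntegralTaylor 4 x := mul_lt_sineIntegralTaylor_four hx₀ hx
      _ ≤ sineIntegral x := sineIntegralTaylor_even_le 1 hx₀.le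
  · calc sineIntegral x ≤ sineIntegralTaylor 5 x := sineIntegral_le_sineIntegralTaylor_odd 2 hx₀.le
      _ < x - x ^ 3 / 18 + x ^ 5 / 576 - 17 * x ^ 7 / 483840 := sineIntegralTaylor_five_lt hx₀ hx
      _ ≤ 1 / 6 * (x + sin x + 8 * sin (x / 2)) := by linarith [le_add_sin_add_eight_sin_half hx₀.le]
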